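/- Assume η² > ζ² + ι²/β², set c = ((β²η² − ι²)/(β²ζ²) − 1)^{−1} > 0, and assume additionally c < β(β²η² − ι²)^{−1/2}. Define N_thresh > 0 by N_thresh^{−p} = ((β²η² − ι²)/(β²ζ²) − 1)^p β^{2p} (β²η² − ι²)^{−p} − β^p (β²η² − ι²)^{−p/2}, which is positive under the preceding assumption. Then for every N > N_thresh there exists a unique x ∈ (0,1) with f_N(x) = c. (Interpreting x = cos θ̂(N), this gives a unique sheared tensile equilibrium angle θ̂(N) ∈ (0, π/2), i.e. a shearing bifurcation from the straight branch at N_thresh.) -/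
import Mathlib


/-- The function
`f_N(x) = [N^{−p} + ((1/ζ²)(1−x²) + (β²/(β²η² − ι²)) x²)^{p/2}]^{−1/p} · (β²/(β²η² − ι²)) x`. -/
noncomputable def fN (p β ζ η ι N x : ℝ) : ℝ :=
  (N ^ (-p) + ((1 / ζ ^ 2) * (1 - x ^ 2)
      + (β ^ 2 / (β ^ 2 * η ^ 2 - ι ^ 2)) * x ^ 2) ^ (p / 2)) ^ (-(1 / p))
    * (β ^ 2 / (β ^ 2 * η ^ 2 - ι ^ 2)) * x

/-- shearing bifurcation. Under the material assumptions
`η² > ζ² + ι²/β²` and `c < β(β²η² − ι²)^{−1/2}` with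
`c = ((β²η² − ι²)/(β²ζ²) − 1)^{−1}`, for every end thrust `N` exceeding the threshold
`N_thresh` (defined by `N_thresh^{−p} = ((β²η² − ι²)/(β²ζ²) − 1)^p β^{2p}(β²η² − ι²)^{−p}
− β^p (β²η² − ι²)^{−p/2} > 0`) there is a unique `x ∈ (0,1)` with `f_N(x) = c`. -/
theorem shearing_bifurcation (p β ζ η ι : ℝ) (hp : 0 < p) (hβ : 0 < β) (hζ : 0 < ζ)
    (hη : 0 < η) (hβηι : 0 < β ^ 2 * η ^ 2 - ι ^ 2)
    (hmat : ζ ^ 2 + ι ^ 2 / β ^ 2 < η ^ 2)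
    (c : ℝ) (hc : c = ((β ^ 2 * η ^ 2 - ι ^ 2) / (β ^ 2 * ζ ^ 2) - 1)⁻¹)
    (hcsmall : c < β * (β ^ 2 * η ^ 2 - ι ^ 2) ^ (-(1 / 2) : ℝ))
    (Nthresh : ℝ) (hNt : 0 < Nthresh)
    (hNtdef : Nthresh ^ (-p)
      = ((β ^ 2 * η ^ 2 - ι ^ 2) / (β ^ 2 * ζ ^ 2) - 1) ^ p * β ^ (2 * p)
          * (β ^ 2 * η ^ 2 - ι ^ 2) ^ (-p)
        - β ^ p * (β ^ 2 * η ^ 2 - ι ^ 2) ^ (-(p / 2))) :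
    ∀ N : ℝ, Nthresh < N →
      ∃! x : ℝ, x ∈ Set.Ioo (0 : ℝ) 1 ∧ fN p β ζ η ι N x = c := by
  intro N hN
  have hD : 0 < β ^ 2 * η ^ 2 - ι ^ 2 := hβηι
  set D := β ^ 2 * η ^ 2 - ι ^ 2 with hDdef
  set A := β ^ 2 / D with hAdef
  set B := (1 : ℝ) / ζ ^ 2 with hBdef
  clear_value B A D
  have hζ2 : (0:ℝ) < ζ ^ 2 := by positivity
  have hβ2 : (0:ℝ) < β ^ 2 := by positivity
  have hA : 0 < A := by rw [hAdef]; positivity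
  have hB : 0 < B := by rw [hBdef]; positivity
  have hAB : A < B := by
    rw [hAdef, hBdef, div_lt_div_iff₀ hD hζ2]
    have h1 : ζ ^ 2 * β ^ 2 + ι ^ 2 < η ^ 2 * β ^ 2 := by
      have := (div_lt_iff₀ hβ2).1 (by linarith [hmat] : ι ^ 2 / β ^ 2 < η ^ 2 - ζ ^ 2)
      linarith
    rw [hDdef]; nlinarith
  have hBA : 0 < B - A := sub_pos.2 hAB
  have hBAratio : B / A = D / (β ^ 2 * ζ ^ 2) := by
    rw [hAdef, hBdef]; field_simp
  have hc' : c = A / (B - A) := by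
    rw [hc, ← hBAratio, div_sub_one hA.ne', inv_div]
  have hc0 : 0 < c := by rw [hc']; positivity
  have hNpos : 0 < N := hNt.trans hN
  have hNp : 0 < N ^ (-p) := Real.rpow_pos_of_pos hNpos _
  set G : ℝ → ℝ := fun x => ((B - A) * x) ^ p - (B - (B - A) * x ^ 2) ^ (p / 2) with hGdef
  clear_value G
  have hbase : ∀ x ∈ Set.Icc (0:ℝ) 1, 0 < B - (B - A) * x ^ 2 := by
    intro x hx
    have hx2 : x ^ 2 ≤ 1 := by
      have h := pow_le_pow_left₀ hx.1 hx.2 2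
      simpa using h
    have h2 : (B - A) * x ^ 2 ≤ (B - A) * 1 := mul_le_mul_of_nonneg_left hx2 hBA.le
    linarith [hA]
  have hGmono : StrictMonoOn G (Set.Icc (0:ℝ) 1) := by
    intro a ha b hb hab
    have h1 : ((B - A) * a) ^ p < ((B - A) * b) ^ p :=
      Real.rpow_lt_rpow (mul_nonneg hBA.le ha.1) (mul_lt_mul_of_pos_left hab hBA) hp
    have h2 : (B - (B - A) * b ^ 2) ^ (p / 2) < (B - (B - A) * a ^ 2) ^ (p / 2) := by
      apply Real.rpow_lt_rpow (hbase b hb).le _ (half_pos hp)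
      have hab2 : a ^ 2 < b ^ 2 := sq_lt_sq' (by linarith [ha.1]) hab
      exact sub_lt_sub_left (mul_lt_mul_of_pos_left hab2 hBA) B
    simp only [hGdef]
    linarith
  have hGcont : ContinuousOn G (Set.Icc (0:ℝ) 1) := by
    rw [hGdef]
    apply ContinuousOn.sub
    · exact (continuousOn_const.mul continuousOn_id).rpow_const (fun x _ => Or.inr hp.le)
    · exact (continuousOn_const.sub (continuousOn_const.mul
        ((continuousOn_id).pow 2))).rpow_const (fun x _ => Or.inr (by positivity))
  have hG0 : G 0 = -(B ^ (p / 2)) := by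
    simp [hGdef, Real.zero_rpow hp.ne']
  have hG1 : G 1 = (B - A) ^ p - A ^ (p / 2) := by
    have h1 : B - (B - A) * (1:ℝ) ^ 2 = A := by ring
    simp only [hGdef, mul_one, h1]
  -- the threshold identity
  have e1 : A ^ p = β ^ (2 * p) * D ^ (-p) := by
    rw [hAdef, Real.div_rpow hβ2.le hD.le, ← Real.rpow_natCast β 2, ← Real.rpow_mul hβ.le,
      Real.rpow_neg hD.le, div_eq_mul_inv]
    norm_num
  have e2 : A ^ (p / 2) = β ^ p * D ^ (-(p / 2)) := by
    rw [hAdef, Real.div_rpow hβ2.le hD.le, ← Real.rpow_natCast β 2, ← Real.rpow_mul hβ.le,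
      Real.rpow_neg hD.le, div_eq_mul_inv]
    norm_num
    left; congr 1; ring
  have e3 : (D / (β ^ 2 * ζ ^ 2) - 1) ^ p * A ^ p = (B - A) ^ p := by
    rw [← Real.mul_rpow (by rw [← hBAratio]; rw [sub_nonneg, le_div_iff₀ hA]; linarith) hA.le]
    congr 1
    rw [← hBAratio]
    field_simp
  have hG1N : G 1 = Nthresh ^ (-p) := by
    rw [hG1, hNtdef, e2, ← e3, e1]
    ring
  have hNlt : N ^ (-p) < Nthresh ^ (-p) := by
    rw [Real.rpow_neg hNpos.le, Real.rpow_neg hNt.le]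
    exact inv_strictAnti₀ (Real.rpow_pos_of_pos hNt _) (Real.rpow_lt_rpow hNt.le hN hp)
  -- key equivalence
  have key : ∀ x ∈ Set.Ioo (0:ℝ) 1, (fN p β ζ η ι N x = c ↔ G x = N ^ (-p)) := by
    intro x hx
    obtain ⟨hx0, hx1⟩ := hx
    have hS : 0 < B - (B - A) * x ^ 2 := hbase x ⟨hx0.le, hx1.le⟩
    set T := N ^ (-p) + (B - (B - A) * x ^ 2) ^ (p / 2) with hTdef
    have hT : 0 < T := add_pos hNp (Real.rpow_pos_of_pos hS _)
    have hU : 0 < T ^ ((1:ℝ) / p) := Real.rpow_pos_of_pos hT _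
    have hSrw : (1 / ζ ^ 2) * (1 - x ^ 2) + (β ^ 2 / (β ^ 2 * η ^ 2 - ι ^ 2)) * x ^ 2
        = B - (B - A) * x ^ 2 := by
      rw [hBdef, hAdef, hDdef]; ring
    have hfN : fN p β ζ η ι N x = T ^ (-(1 / p)) * A * x := by
      rw [fN, hSrw, hTdef, hAdef, hDdef]
    have hcA : c * (B - A) = A := by rw [hc']; field_simp
    constructor
    · intro h
      rw [hfN, Real.rpow_neg hT.le, mul_assoc, inv_mul_eq_iff_eq_mul₀ hU.ne'] at h
      have h2 : (B - A) * x = T ^ ((1:ℝ) / p) := by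
        have h3 : c * ((B - A) * x) = c * T ^ ((1:ℝ) / p) := by
          linear_combination h + x * hcA
        exact mul_left_cancel₀ hc0.ne' h3
      have h4 : ((B - A) * x) ^ p = T := by
        rw [h2, ← Real.rpow_mul hT.le, one_div, inv_mul_cancel₀ hp.ne', Real.rpow_one]
      simp only [hGdef]
      rw [h4, hTdef]
      ring
    · intro h
      simp only [hGdef] at h
      have h4 : ((B - A) * x) ^ p = T := by rw [hTdef]; linarith
      have h2 : (B - A) * x = T ^ ((1:ℝ) / p) := by
        rw [← h4, ← Real.rpow_mul (by positivity), mul_one_div, div_self hp.ne',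
          Real.rpow_one]
      rw [hfN, Real.rpow_neg hT.le, mul_assoc, ← h2, hc']
      field_simp
  -- assemble
  have hmem : N ^ (-p) ∈ Set.Ioo (G 0) (G 1) := by
    constructor
    · rw [hG0]
      have := Real.rpow_pos_of_pos hB (p / 2)
      linarith
    · rw [hG1N]; exact hNlt
  obtain ⟨x, hxIoo, hGx⟩ := intermediate_value_Ioo zero_le_one hGcont hmem
  refine ⟨x, ⟨hxIoo, (key x hxIoo).2 hGx⟩, ?_⟩
  rintro y ⟨hyIoo, hy⟩
  have hGy := (key y hyIoo).1 hy
  exact hGmono.injOn (Set.Ioo_subset_Icc_self hyIoo) (Set.Ioo_subset_Icc_self hxIoo)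
    (by rw [hGy, hGx])
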